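/- arXiv:2407.15201 — 4 statements merged into one kernel-verified Lean document; each statement's English description precedes it below -/
import Mathlib

section
/- For every positive integer n, S_q(2n) = 2q · S_q(n) + n·q. -/
open scoped BigOperators

/-- distance from `x` to the nearest integer -/
noncomputable def tau (x : ℝ) : ℝ := |x - round x|

/-- q-weighted binary digit sum: `s_q(n) = Σ ω_i q^(i+1)` -/
noncomputable def sdigq (q : ℝ) (n : ℕ) : ℝ :=
  ∑ i ∈ Finset.range n, if n.testBit i then q ^ (i + 1) else 0

/-- `S_q(n) = Σ_{k<n} s_q(k)` -/
noncomputable def Sdigq (q : ℝ) (n : ℕ) : ℝ := ∑ k ∈ Finset.range n, sdigq q k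

/-- Takagi–Landsberg function -/
noncomputable def Ta (a x : ℝ) : ℝ := ∑' n : ℕ, a ^ n * tau (2 ^ n * x)

/-! Shifting the binary digits of `k` one place up multiplies `s_q(k)` by `q`, so
`s_q(2k) = q s_q(k)` and `s_q(2k+1) = q + q s_q(k)`. Grouping the summands of `S_q(2n)` in
pairs `s_q(2k) + s_q(2k+1) = 2q s_q(k) + q` for `k < n` gives the identity. -/

open Finset

lemma sdigq_eq_sum_range_of_le (q : ℝ) {n m : ℕ} (h : n ≤ m) :
    sdigq q n = ∑ i ∈ range m, if n.testBit i then q ^ (i + 1) else 0 := by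
  rw [sdigq, ← sum_range_add_sum_Ico _ h, left_eq_add]
  refine sum_eq_zero fun i hi => ?_
  have hlt : n < 2 ^ i := Nat.lt_two_pow_self.trans_le <| Nat.pow_le_pow_right two_pos (mem_Ico.1 hi).1
  simp [Nat.testBit_eq_false_of_lt hlt]

lemma sdigq_bit (q : ℝ) (b : Bool) (k : ℕ) :
    sdigq q (Nat.bit b k) = (if b then q else 0) + q * sdigq q k := by
  have hk : k ≤ Nat.bit b k := by rw [Nat.bit_val]; omega
  rw [sdigq_eq_sum_range_of_le q (Nat.le_succ _), sum_range_succ',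
    sdigq_eq_sum_range_of_le q hk, mul_sum, add_comm]
  simp only [Nat.testBit_bit_succ, Nat.testBit_bit_zero, zero_add, pow_one]
  congr 1
  refine sum_congr rfl fun i _ => ?_
  split_ifs <;> ring

lemma sdigq_two_mul (q : ℝ) (k : ℕ) : sdigq q (2 * k) = q * sdigq q k := by
  simpa using sdigq_bit q false k

lemma sdigq_two_mul_add_one (q : ℝ) (k : ℕ) : sdigq q (2 * k + 1) = q + q * sdigq q k := by
  simpa using sdigq_bit q true k

theorem Sq_two_mul_general (q : ℝ) (n : ℕ) :
    Sdigq q (2 * n) = 2 * q * Sdigq q n + n * q := by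
  induction n with
  | zero => simp [Sdigq]
  | succ n ih =>
    unfold Sdigq at ih ⊢
    rw [mul_add_one, sum_range_succ, sum_range_succ, sum_range_succ, ih,
      sdigq_two_mul, sdigq_two_mul_add_one]
    push_cast
    ring

theorem Sq_two_mul (q : ℝ) (n : ℕ) (hn : 0 < n) :
    Sdigq q (2 * n) = 2 * q * Sdigq q n + n * q :=
  Sq_two_mul_general q n
end

section
/- For every natural number k and real q ≠ 1, S_q(2^k) = q · (1 − q^k)/(1 − q) · 2^{k−1}, i.e. (1−q)·S_q(2^k)·2 = q·(1 − q^k)·2^k. -/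
open scoped BigOperators

/-! Every `k < 2 ^ m` has bit `m` of `2 ^ m + k` set and its other bits unchanged, so the
`2 ^ m` numbers in `[2 ^ m, 2 ^ (m + 1))` each carry the digit sum of their partner below `2 ^ m`
plus `q ^ (m + 1)`. Hence `2 S_q(2 ^ (m + 1)) = 2 · 2 S_q(2 ^ m) + 2 ^ (m + 1) q ^ (m + 1)`,
which gives `2 S_q(2 ^ k) = 2 ^ k (q + ⋯ + q ^ k)`, a geometric sum. -/

open Finset

lemma sum_range_testBit_of_lt_two_pow {M : Type*} [AddCommMonoid M] (f : ℕ → M)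
    {n m m' : ℕ} (hn : n < 2 ^ m) (hm : m ≤ m') :
    (∑ i ∈ range m', if n.testBit i then f i else 0)
      = ∑ i ∈ range m, if n.testBit i then f i else 0 := by
  refine (sum_subset (range_subset_range.2 hm) fun i _ hi => ?_).symm
  have hi : m ≤ i := by simpa using hi
  rw [Nat.testBit_lt_two_pow (hn.trans_le (Nat.pow_le_pow_right two_pos hi)), if_neg Bool.false_ne_true]

lemma sdigq_eq_sum_range (q : ℝ) {n m : ℕ} (hn : n < 2 ^ m) :
    sdigq q n = ∑ i ∈ range m, if n.testBit i then q ^ (i + 1) else 0 := by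
  rcases le_total n m with hnm | hmn
  · exact (sum_range_testBit_of_lt_two_pow _ Nat.lt_two_pow_self hnm).symm
  · exact sum_range_testBit_of_lt_two_pow _ hn hmn

lemma sdigq_two_pow_add (q : ℝ) {m n : ℕ} (hn : n < 2 ^ m) :
    sdigq q (2 ^ m + n) = q ^ (m + 1) + sdigq q n := by
  have hn' : n < 2 ^ (m + 1) := hn.trans (Nat.pow_lt_pow_succ one_lt_two)
  have hlt : 2 ^ m + n < 2 ^ (m + 1) := by rw [pow_succ]; omega
  have hbit : n.testBit m = false := Nat.testBit_lt_two_pow hn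
  have hlow : ∀ i ∈ range m, (if (2 ^ m + n).testBit i then q ^ (i + 1) else 0)
      = if n.testBit i then q ^ (i + 1) else 0 := fun i hi => by
    rw [Nat.testBit_two_pow_add_gt (mem_range.1 hi)]
  rw [sdigq_eq_sum_range q hlt, sdigq_eq_sum_range q hn', sum_range_succ, sum_range_succ,
    sum_congr rfl hlow, Nat.testBit_two_pow_add_eq, hbit]
  simp only [Bool.not_false, if_true, Bool.false_eq_true, if_false, add_zero]
  ring

lemma Sdigq_two_pow_succ (q : ℝ) (m : ℕ) :
    Sdigq q (2 ^ (m + 1)) = 2 * Sdigq q (2 ^ m) + 2 ^ m * q ^ (m + 1) := by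
  have hupper : ∀ n ∈ range (2 ^ m), sdigq q (2 ^ m + n) = q ^ (m + 1) + sdigq q n :=
    fun n hn => sdigq_two_pow_add q (mem_range.1 hn)
  rw [Sdigq, pow_succ, mul_two, sum_range_add, sum_congr rfl hupper, sum_add_distrib, sum_const,
    card_range, nsmul_eq_mul, Sdigq]
  push_cast
  ring

lemma two_mul_Sdigq_two_pow (q : ℝ) (k : ℕ) :
    2 * Sdigq q (2 ^ k) = 2 ^ k * ∑ i ∈ range k, q ^ (i + 1) := by
  induction k with
  | zero => simp [Sdigq, sdigq]
  | succ k ih => rw [Sdigq_two_pow_succ, sum_range_succ]; linear_combination 2 * ih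

theorem Sq_pow_two_general (q : ℝ) (k : ℕ) :
    (1 - q) * Sdigq q (2 ^ k) * 2 = q * (1 - q ^ k) * 2 ^ k := by
  have hgeom : ∑ i ∈ range k, q ^ (i + 1) = q * ∑ i ∈ range k, q ^ i := by
    simp only [pow_succ', mul_sum]
  rw [← mul_neg_geom_sum, mul_assoc, mul_comm (Sdigq _ _), two_mul_Sdigq_two_pow, hgeom]
  ring

theorem Sq_pow_two (q : ℝ) (hq : q ≠ 1) (k : ℕ) :
    (1 - q) * Sdigq q (2 ^ k) * 2 = q * (1 - q ^ k) * 2 ^ k :=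
  Sq_pow_two_general q k
end

section
/- Suppose |a₀| < 1, |a₁| < 1, g₀ and g₁ are continuous on [0,1], and a₀·g₁(1)/(1−a₁) + g₀(1) = a₁·g₀(0)/(1−a₀) + g₁(0). Then there exists a unique continuous function f : [0,1] → ℝ satisfying f(x/2) = a₀·f(x) + g₀(x) and f((x+1)/2) = a₁·f(x) + g₁(x) for all x ∈ [0,1]. -/
open scoped BigOperators

/-!
Read backwards, the two equations say that a solution is a fixed point on `[0, 1]` of
`f ↦ (x ↦ a₀ f(2x) + g₀(2x) for x ≤ 1/2, a₁ f(2x - 1) + g₁(2x - 1) for x > 1/2)`,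
which shrinks sup-distances by the factor `max |a₀| |a₁| < 1`; this alone gives uniqueness.
For existence, the equations at `x = 0` and `x = 1` force `f 0 = g₀ 0 / (1 - a₀)` and
`f 1 = g₁ 1 / (1 - a₁)`. On the complete space of continuous functions with these endpoint
values the consistency condition makes the two branches agree at `1/2`, so the map is a
contraction of that space and Banach's fixed-point theorem applies.
-/

open Set Function
open scoped unitInterval

section DeRhamMap

variable (a₀ a₁ : ℝ) (g₀ g₁ : ℝ → ℝ)

def SolvesDeRham (f : ℝ → ℝ) : Prop :=
  ∀ x ∈ I, f (x / 2) = a₀ * f x + g₀ x ∧ f ((x + 1) / 2) = a₁ * f x + g₁ x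

noncomputable def deRhamMap (f : ℝ → ℝ) (x : ℝ) : ℝ :=
  if x ≤ 1 / 2 then a₀ * f (2 * x) + g₀ (2 * x) else a₁ * f (2 * x - 1) + g₁ (2 * x - 1)

variable {a₀ a₁ g₀ g₁} {f : ℝ → ℝ}

theorem deRhamMap_div_two {x : ℝ} (hx : x ≤ 1) :
    deRhamMap a₀ a₁ g₀ g₁ f (x / 2) = a₀ * f x + g₀ x := by
  rw [deRhamMap, if_pos (by linarith), mul_div_cancel₀ x two_ne_zero]

theorem deRhamMap_add_one_div_two (hglue : a₀ * f 1 + g₀ 1 = a₁ * f 0 + g₁ 0) {x : ℝ}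
    (hx : 0 ≤ x) : deRhamMap a₀ a₁ g₀ g₁ f ((x + 1) / 2) = a₁ * f x + g₁ x := by
  rcases hx.eq_or_lt with rfl | hx
  · norm_num [deRhamMap, hglue]
  · rw [deRhamMap, if_neg (by linarith), show 2 * ((x + 1) / 2) - 1 = x by ring]

theorem solvesDeRham_of_eqOn (hglue : a₀ * f 1 + g₀ 1 = a₁ * f 0 + g₁ 0)
    (hf : EqOn f (deRhamMap a₀ a₁ g₀ g₁ f) I) : SolvesDeRham a₀ a₁ g₀ g₁ f := by
  rintro x ⟨hx₀, hx₁⟩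
  constructor
  · rw [hf ⟨by linarith, by linarith⟩, deRhamMap_div_two hx₁]
  · rw [hf ⟨by linarith, by linarith⟩, deRhamMap_add_one_div_two hglue hx₀]

theorem SolvesDeRham.eqOn_deRhamMap (hf : SolvesDeRham a₀ a₁ g₀ g₁ f) :
    EqOn f (deRhamMap a₀ a₁ g₀ g₁ f) I := by
  rintro x ⟨hx₀, hx₁⟩
  by_cases hx : x ≤ 1 / 2
  · rw [deRhamMap, if_pos hx, ← (hf (2 * x) ⟨by linarith, by linarith⟩).1,
      mul_div_cancel_left₀ x two_ne_zero]
  · rw [deRhamMap, if_neg hx, ← (hf (2 * x - 1) ⟨by linarith, by linarith⟩).2, sub_add_cancel,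
      mul_div_cancel_left₀ x two_ne_zero]

theorem continuousOn_deRhamMap (hf : ContinuousOn f I) (hg₀ : ContinuousOn g₀ I)
    (hg₁ : ContinuousOn g₁ I) (hglue : a₀ * f 1 + g₀ 1 = a₁ * f 0 + g₁ 0) :
    ContinuousOn (deRhamMap a₀ a₁ g₀ g₁ f) I := by
  refine ContinuousOn.if ?_ ?_ ?_
  · rintro x ⟨-, hx⟩
    rw [Iic_def, frontier_Iic] at hx
    rw [hx]
    norm_num [hglue]
  · have hmaps : MapsTo (fun x : ℝ => 2 * x) (I ∩ closure {x | x ≤ 1 / 2}) I := by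
      rintro x ⟨⟨hx₀, -⟩, hx⟩
      rw [Iic_def, closure_Iic] at hx
      exact ⟨by linarith, by linarith [mem_Iic.1 hx]⟩
    exact (continuousOn_const.mul (hf.comp (by fun_prop) hmaps)).add
      (hg₀.comp (by fun_prop) hmaps)
  · have hmaps : MapsTo (fun x : ℝ => 2 * x - 1) (I ∩ closure {x | ¬ x ≤ 1 / 2}) I := by
      rintro x ⟨⟨-, hx₁⟩, hx⟩
      simp only [not_le] at hx
      rw [Ioi_def, closure_Ioi] at hx
      exact ⟨by linarith [mem_Ici.1 hx], by linarith⟩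
    exact (continuousOn_const.mul (hf.comp (by fun_prop) hmaps)).add
      (hg₁.comp (by fun_prop) hmaps)

theorem abs_deRhamMap_sub_le {f' : ℝ → ℝ} {d : ℝ} (hd : ∀ y ∈ I, |f y - f' y| ≤ d) {x : ℝ}
    (hx : x ∈ I) :
    |deRhamMap a₀ a₁ g₀ g₁ f x - deRhamMap a₀ a₁ g₀ g₁ f' x| ≤ max |a₀| |a₁| * d := by
  have hbranch : ∀ (a : ℝ) (g : ℝ → ℝ), |a| ≤ max |a₀| |a₁| → ∀ y ∈ I,
      |a * f y + g y - (a * f' y + g y)| ≤ max |a₀| |a₁| * d := fun a g ha y hy =>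
    calc |a * f y + g y - (a * f' y + g y)| = |a| * |f y - f' y| := by rw [← abs_mul]; ring_nf
      _ ≤ max |a₀| |a₁| * d :=
        mul_le_mul ha (hd y hy) (abs_nonneg _) ((abs_nonneg a).trans ha)
  obtain ⟨hx₀, hx₁⟩ := hx
  unfold deRhamMap
  split_ifs
  · exact hbranch a₀ g₀ (le_max_left _ _) _ ⟨by linarith, by linarith⟩
  · exact hbranch a₁ g₁ (le_max_right _ _) _ ⟨by linarith, by linarith⟩

end DeRhamMap

section FixedPoint

variable {a₀ a₁ : ℝ} {g₀ g₁ : ℝ → ℝ}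

theorem eqOn_of_solvesDeRham (ha₀ : |a₀| < 1) (ha₁ : |a₁| < 1) {f f' : ℝ → ℝ}
    (hf : ContinuousOn f I) (hf' : ContinuousOn f' I) (hfs : SolvesDeRham a₀ a₁ g₀ g₁ f)
    (hfs' : SolvesDeRham a₀ a₁ g₀ g₁ f') : EqOn f f' I := by
  set F : C(I, ℝ) := ⟨domRestrict I f, hf.domRestrict⟩
  set F' : C(I, ℝ) := ⟨domRestrict I f', hf'.domRestrict⟩
  have hdist : ∀ y ∈ I, |f y - f' y| ≤ dist F F' := fun y hy =>
    ContinuousMap.dist_apply_le_dist (f := F) (g := F') ⟨y, hy⟩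
  have hcontr : dist F F' ≤ max |a₀| |a₁| * dist F F' := by
    refine (ContinuousMap.dist_le (by positivity)).2 fun x => ?_
    rw [Real.dist_eq]
    change |f x - f' x| ≤ _
    rw [hfs.eqOn_deRhamMap x.2, hfs'.eqOn_deRhamMap x.2]
    exact abs_deRhamMap_sub_le hdist x.2
  have hFF' : F = F' :=
    dist_le_zero.1 <| by nlinarith [max_lt ha₀ ha₁, dist_nonneg (x := F) (y := F')]
  exact fun x hx => congr($hFF' ⟨x, hx⟩)

def endpointSet (c₀ c₁ : ℝ) : Set C(I, ℝ) := {F | F 0 = c₀ ∧ F 1 = c₁}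

theorem isClosed_endpointSet (c₀ c₁ : ℝ) : IsClosed (endpointSet c₀ c₁) :=
  (isClosed_eq (continuous_eval_const 0) continuous_const).inter
    (isClosed_eq (continuous_eval_const 1) continuous_const)

instance (c₀ c₁ : ℝ) : CompleteSpace (endpointSet c₀ c₁) :=
  (isClosed_endpointSet c₀ c₁).completeSpace_coe

instance (c₀ c₁ : ℝ) : Nonempty (endpointSet c₀ c₁) :=
  ⟨⟨⟨fun x => c₀ + (c₁ - c₀) * x, by fun_prop⟩, by simp, by simp⟩⟩

variable {c₀ c₁ : ℝ}

theorem glue_IccExtend_of_mem_endpointSet (hglue : a₀ * c₁ + g₀ 1 = a₁ * c₀ + g₁ 0)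
    {F : C(I, ℝ)} (hF : F ∈ endpointSet c₀ c₁) :
    a₀ * IccExtend zero_le_one F 1 + g₀ 1 = a₁ * IccExtend zero_le_one F 0 + g₁ 0 := by
  rw [IccExtend_right, IccExtend_left]
  change a₀ * F 1 + g₀ 1 = a₁ * F 0 + g₁ 0
  rwa [hF.1, hF.2]

noncomputable def deRhamOp (hg₀ : ContinuousOn g₀ I) (hg₁ : ContinuousOn g₁ I)
    (hc₀ : a₀ * c₀ + g₀ 0 = c₀) (hc₁ : a₁ * c₁ + g₁ 1 = c₁)
    (hglue : a₀ * c₁ + g₀ 1 = a₁ * c₀ + g₁ 0) (F : endpointSet c₀ c₁) :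
    endpointSet c₀ c₁ := by
  refine ⟨⟨domRestrict I (deRhamMap a₀ a₁ g₀ g₁ (IccExtend zero_le_one F)),
    (continuousOn_deRhamMap F.1.continuous.Icc_extend'.continuousOn hg₀ hg₁
      (glue_IccExtend_of_mem_endpointSet hglue F.2)).domRestrict⟩, ?_, ?_⟩
  · change deRhamMap a₀ a₁ g₀ g₁ (IccExtend zero_le_one F) 0 = c₀
    simp [deRhamMap, F.2.1, hc₀]
  · change deRhamMap a₀ a₁ g₀ g₁ (IccExtend zero_le_one F) 1 = c₁
    norm_num [deRhamMap, F.2.2, hc₁]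

theorem contractingWith_deRhamOp (ha₀ : |a₀| < 1) (ha₁ : |a₁| < 1) (hg₀ : ContinuousOn g₀ I)
    (hg₁ : ContinuousOn g₁ I) (hc₀ : a₀ * c₀ + g₀ 0 = c₀) (hc₁ : a₁ * c₁ + g₁ 1 = c₁)
    (hglue : a₀ * c₁ + g₀ 1 = a₁ * c₀ + g₁ 0) :
    ContractingWith (max ‖a₀‖₊ ‖a₁‖₊) (deRhamOp hg₀ hg₁ hc₀ hc₁ hglue) := by
  have hK : ((max ‖a₀‖₊ ‖a₁‖₊ : NNReal) : ℝ) = max |a₀| |a₁| := by simp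
  refine ⟨by simpa [← NNReal.coe_lt_coe, hK] using max_lt ha₀ ha₁,
    LipschitzWith.of_dist_le_mul fun F F' => ?_⟩
  rw [Subtype.dist_eq, Subtype.dist_eq, hK]
  refine (ContinuousMap.dist_le (by positivity)).2 fun x => ?_
  refine abs_deRhamMap_sub_le (fun y hy => ?_) x.2
  rw [IccExtend_of_mem _ _ hy, IccExtend_of_mem _ _ hy, ← Real.dist_eq]
  exact ContinuousMap.dist_apply_le_dist _

theorem exists_solvesDeRham (ha₀ : |a₀| < 1) (ha₁ : |a₁| < 1) (hg₀ : ContinuousOn g₀ I)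
    (hg₁ : ContinuousOn g₁ I) (hc₀ : a₀ * c₀ + g₀ 0 = c₀) (hc₁ : a₁ * c₁ + g₁ 1 = c₁)
    (hglue : a₀ * c₁ + g₀ 1 = a₁ * c₀ + g₁ 0) :
    ∃ f, ContinuousOn f I ∧ SolvesDeRham a₀ a₁ g₀ g₁ f := by
  have hT := contractingWith_deRhamOp ha₀ ha₁ hg₀ hg₁ hc₀ hc₁ hglue
  obtain ⟨F, hF⟩ : ∃ F, IsFixedPt (deRhamOp hg₀ hg₁ hc₀ hc₁ hglue) F :=
    ⟨_, hT.fixedPoint_isFixedPt⟩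
  refine ⟨IccExtend zero_le_one F.1, F.1.continuous.Icc_extend'.continuousOn,
    solvesDeRham_of_eqOn (glue_IccExtend_of_mem_endpointSet hglue F.2) fun x hx => ?_⟩
  rw [IccExtend_of_mem _ _ hx]
  exact congr(Subtype.val $hF ⟨x, hx⟩).symm

end FixedPoint

theorem deRham_existence_uniqueness (a₀ a₁ : ℝ) (ha₀ : |a₀| < 1) (ha₁ : |a₁| < 1)
    (g₀ g₁ : ℝ → ℝ) (hg₀ : ContinuousOn g₀ (Set.Icc 0 1))
    (hg₁ : ContinuousOn g₁ (Set.Icc 0 1))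
    (hcons : a₀ * g₁ 1 / (1 - a₁) + g₀ 1 = a₁ * g₀ 0 / (1 - a₀) + g₁ 0) :
    (∃ f : ℝ → ℝ, ContinuousOn f (Set.Icc 0 1) ∧
      ∀ x ∈ Set.Icc (0:ℝ) 1,
        f (x / 2) = a₀ * f x + g₀ x ∧ f ((x + 1) / 2) = a₁ * f x + g₁ x) ∧
    (∀ f g : ℝ → ℝ,
      (ContinuousOn f (Set.Icc 0 1) ∧ ∀ x ∈ Set.Icc (0:ℝ) 1,
        f (x / 2) = a₀ * f x + g₀ x ∧ f ((x + 1) / 2) = a₁ * f x + g₁ x) →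
      (ContinuousOn g (Set.Icc 0 1) ∧ ∀ x ∈ Set.Icc (0:ℝ) 1,
        g (x / 2) = a₀ * g x + g₀ x ∧ g ((x + 1) / 2) = a₁ * g x + g₁ x) →
      Set.EqOn f g (Set.Icc 0 1)) := by
  have h₀ : 1 - a₀ ≠ 0 := sub_ne_zero.2 (abs_lt.1 ha₀).2.ne'
  have h₁ : 1 - a₁ ≠ 0 := sub_ne_zero.2 (abs_lt.1 ha₁).2.ne'
  have hc₀ : a₀ * (g₀ 0 / (1 - a₀)) + g₀ 0 = g₀ 0 / (1 - a₀) := by field_simp; ring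
  have hc₁ : a₁ * (g₁ 1 / (1 - a₁)) + g₁ 1 = g₁ 1 / (1 - a₁) := by field_simp; ring
  have hglue : a₀ * (g₁ 1 / (1 - a₁)) + g₀ 1 = a₁ * (g₀ 0 / (1 - a₀)) + g₁ 0 := by
    rwa [← mul_div_assoc, ← mul_div_assoc]
  exact ⟨exists_solvesDeRham ha₀ ha₁ hg₀ hg₁ hc₀ hc₁ hglue,
    fun f g hf hg => eqOn_of_solvesDeRham ha₀ ha₁ hf.1 hg.1 hf.2 hg.2⟩
end

section
/- For every positive integer n, (1/n)·S_{1/2}(n) = (1/2)·(1 − (1/n)·(1 + Σ_{j=1}^{⌊log₂ n⌋} τ(n/2^j))), where τ(x) = dist(x, ℤ). -/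
open scoped BigOperators

/-!
Swapping the two sums gives `S_q(n) = ∑ᵢ q^(i+1) · #{k < n | bit i of k is 1}`. Every block of
`2^(i+1)` consecutive integers contains exactly `2^i` with bit `i` set, and counting the
incomplete last block gives `n/2 - 2^i τ(n/2^(i+1))`. For `q = 1/2` the weights `q^(i+1) 2^i`
are all `1/2`, the main terms form a geometric sum, and the top term
`τ(n/2^(L+1)) = 1 - n/2^(L+1)`, `L = ⌊log₂ n⌋`, cancels its remainder.
-/

open Finset

lemma tau_add_one (x : ℝ) : tau (x + 1) = tau x := by
  rw [tau, tau, round_add_one]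
  push_cast
  ring_nf

lemma tau_of_le_half {x : ℝ} (h₀ : 0 ≤ x) (h₁ : x ≤ 1 / 2) : tau x = x := by
  rw [tau, abs_sub_round_eq_min, Int.fract_eq_self.2 ⟨h₀, by linarith⟩]
  exact min_eq_left (by linarith)

lemma tau_of_half_le {x : ℝ} (h₀ : 1 / 2 ≤ x) (h₁ : x < 1) : tau x = 1 - x := by
  rw [tau, abs_sub_round_eq_min, Int.fract_eq_self.2 ⟨by linarith, h₁⟩]
  exact min_eq_right (by linarith)

lemma Nat.testBit_iff_two_pow_le {k i : ℕ} (hk : k < 2 ^ (i + 1)) :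
    k.testBit i ↔ 2 ^ i ≤ k := by
  constructor
  · intro h
    by_contra! hlt
    simp [Nat.testBit_lt_two_pow hlt] at h
  · intro h
    obtain ⟨m, rfl⟩ := Nat.exists_eq_add_of_le h
    rw [Nat.testBit_two_pow_add_eq, Nat.testBit_lt_two_pow (by rw [pow_succ] at hk; omega)]
    rfl

def bitCount (i n : ℕ) : ℕ := #{k ∈ range n | k.testBit i}

-- Truncated subtraction: the count is `0` when `n ≤ 2 ^ i`.
lemma bitCount_of_le {i n : ℕ} (hn : n ≤ 2 ^ (i + 1)) : bitCount i n = n - 2 ^ i := by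
  have : {k ∈ range n | k.testBit i} = Ico (2 ^ i) n := by
    ext k
    simp only [mem_filter, mem_range, mem_Ico]
    constructor
    · rintro ⟨hkn, hk⟩
      exact ⟨(Nat.testBit_iff_two_pow_le (by omega)).1 hk, hkn⟩
    · rintro ⟨hk, hkn⟩
      exact ⟨hkn, (Nat.testBit_iff_two_pow_le (by omega)).2 hk⟩
  rw [bitCount, this, Nat.card_Ico]

lemma bitCount_two_pow_succ_add (i n : ℕ) :
    bitCount i (2 ^ (i + 1) + n) = 2 ^ i + bitCount i n := by
  simp only [bitCount, card_filter, sum_range_add, Nat.testBit_two_pow_add_gt i.lt_succ_self]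
  rw [← card_filter, ← bitCount, bitCount_of_le le_rfl, pow_succ]
  omega

lemma bitCount_eq (i n : ℕ) :
    (bitCount i n : ℝ) = n / 2 - 2 ^ i * tau (n / 2 ^ (i + 1)) := by
  induction n using Nat.strong_induction_on with
  | _ n ih =>
  rcases lt_or_ge n (2 ^ (i + 1)) with hlt | hge
  · rw [bitCount_of_le hlt.le]
    rcases le_or_gt n (2 ^ i) with hle | hgt
    · have hle' : (n : ℝ) ≤ 2 ^ i := by exact_mod_cast hle
      rw [Nat.sub_eq_zero_of_le hle, tau_of_le_half (by positivity)
        (by rw [div_le_iff₀ (by positivity), pow_succ]; linarith)]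
      field_simp
      ring
    · have hlt' : (n : ℝ) < 2 ^ (i + 1) := by exact_mod_cast hlt
      have hgt' : (2 : ℝ) ^ i < n := by exact_mod_cast hgt
      rw [Nat.cast_sub hgt.le,
        tau_of_half_le (by rw [le_div_iff₀ (by positivity), pow_succ]; linarith)
          ((div_lt_one (by positivity)).2 hlt')]
      push_cast
      field_simp
      ring
  · obtain ⟨m, rfl⟩ := Nat.exists_eq_add_of_le hge
    have hm : m < 2 ^ (i + 1) + m := by have := Nat.two_pow_pos (i + 1); omega
    have hshift : ((2 ^ (i + 1) + m : ℕ) : ℝ) / 2 ^ (i + 1) = m / 2 ^ (i + 1) + 1 := by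
      push_cast
      field_simp
      ring
    rw [bitCount_two_pow_succ_add, hshift, tau_add_one]
    push_cast
    rw [ih m hm]
    field_simp
    ring

lemma sum_range_testBit_congr (f : ℕ → ℝ) {k N M : ℕ} (hN : k < 2 ^ N) (hM : k < 2 ^ M) :
    ∑ i ∈ range N, (if k.testBit i then f i else 0) =
      ∑ i ∈ range M, (if k.testBit i then f i else 0) := by
  wlog hNM : N ≤ M generalizing N M
  · exact (this hM hN (le_of_not_ge hNM)).symm
  refine sum_subset (range_subset_range.2 hNM) fun i _ hi => ?_
  rw [Nat.testBit_lt_two_pow (hN.trans_le (Nat.pow_le_pow_right two_pos (by simpa using hi)))]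
  rfl

lemma Sdigq_eq_sum_tau (q : ℝ) {n m : ℕ} (hn : n ≤ 2 ^ m) :
    Sdigq q n = ∑ i ∈ range m, q ^ (i + 1) * (n / 2 - 2 ^ i * tau (n / 2 ^ (i + 1))) := by
  have hdig : ∀ k ∈ range n,
      sdigq q k = ∑ i ∈ range m, if k.testBit i then q ^ (i + 1) else 0 := fun k hk =>
    sum_range_testBit_congr _ Nat.lt_two_pow_self ((mem_range.1 hk).trans_le hn)
  rw [Sdigq, sum_congr rfl hdig, sum_comm]
  refine sum_congr rfl fun i _ => ?_
  rw [← bitCount_eq, bitCount, card_filter, Nat.cast_sum, mul_sum]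
  refine sum_congr rfl fun k _ => ?_
  split_ifs <;> simp

lemma Sdigq_half_eq {n m : ℕ} (hn : n ≤ 2 ^ m) :
    Sdigq (1 / 2) n = n / 2 * (1 - 1 / 2 ^ m) - 1 / 2 * ∑ j ∈ Icc 1 m, tau (n / 2 ^ j) := by
  have hterm : ∀ i ∈ range m, (1 / 2 : ℝ) ^ (i + 1) * (n / 2 - 2 ^ i * tau (n / 2 ^ (i + 1))) =
      n / 4 * (1 / 2) ^ i - 1 / 2 * tau (n / 2 ^ (i + 1)) := fun i _ => by
    simp only [div_pow, one_pow]
    field_simp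
    ring
  have hgeom : ∑ i ∈ range m, (1 / 2 : ℝ) ^ i = 2 * (1 - 1 / 2 ^ m) := by
    rw [geom_sum_eq (by norm_num), div_pow, one_pow]
    field_simp
    ring
  have hshift : ∑ i ∈ range m, tau (n / 2 ^ (i + 1)) = ∑ j ∈ Icc 1 m, tau (n / 2 ^ j) := by
    rw [range_eq_Ico, sum_Ico_add' (fun j => tau (n / 2 ^ j)), zero_add, Ico_add_one_right_eq_Icc]
  rw [Sdigq_eq_sum_tau _ hn, sum_congr rfl hterm, sum_sub_distrib, ← mul_sum, ← mul_sum, hgeom,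
    hshift]
  ring

lemma tau_div_two_pow_log_succ {n : ℕ} (hn : n ≠ 0) :
    tau (n / 2 ^ (Nat.log 2 n + 1)) = 1 - n / 2 ^ (Nat.log 2 n + 1) := by
  have hlo : (2 : ℝ) ^ Nat.log 2 n ≤ n := by exact_mod_cast Nat.pow_log_le_self 2 hn
  have hhi : (n : ℝ) < 2 ^ (Nat.log 2 n + 1) := by
    exact_mod_cast Nat.lt_pow_succ_log_self one_lt_two n
  refine tau_of_half_le ?_ ((div_lt_one (by positivity)).2 hhi)
  rw [le_div_iff₀ (by positivity), pow_succ]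
  linarith

theorem Sq_half_van_der_Corput (n : ℕ) (hn : 0 < n) :
    (1 / (n : ℝ)) * Sdigq (1/2) n =
      (1 / 2) * (1 - (1 / (n : ℝ)) *
        (1 + ∑ j ∈ Finset.Icc 1 (Nat.log 2 n), tau ((n : ℝ) / 2 ^ j))) := by
  have hpow : n ≤ 2 ^ (Nat.log 2 n + 1) := (Nat.lt_pow_succ_log_self one_lt_two n).le
  rw [Sdigq_half_eq hpow, sum_Icc_succ_top (by omega), tau_div_two_pow_log_succ hn.ne']
  field_simp
  ring
end
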